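/- arXiv:1705.10625 — 2 statements merged into one kernel-verified Lean document; each statement's English description precedes it below -/
import Mathlib

section
/- Let A be a block automaton over a finite alphabet Σ and let R be a transverse non re-entering component of A. Then for every state p ∈ R, the right language of p factorizes as L(p) = Lin_R(p) · Lout(R), where · denotes language concatenation. -/
set_option autoImplicit false

/-- A block automaton over an alphabet `α`: a set of initial states, a set of final
states, and a set of transitions labeled by words over `α`. -/
structure BlockAutomaton (α : Type) (Q : Type) where
  init : Set Q
  final : Set Q
  trans : Set (Q × List α × Q)

namespace BlockAutomaton

variable {α Q : Type}

/-- Well-formedness: the transition set is finite and every label is a block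
(a nonempty word). -/
def IsWF (A : BlockAutomaton α Q) : Prop :=
  A.trans.Finite ∧ ∀ t ∈ A.trans, t.2.1 ≠ ([] : List α)

/-- The transitive closure `δ*` of the transition relation. -/
inductive Path (A : BlockAutomaton α Q) : Q → List α → Q → Prop
  | refl (p : Q) : Path A p [] p
  | step {p r q : Q} {b u : List α} :
      (p, b, r) ∈ A.trans → Path A r u q → Path A p (b ++ u) q

/-- The right language of a state. -/
def rightLang (A : BlockAutomaton α Q) (q : Q) : Language α :=
  {w | ∃ f ∈ A.final, A.Path q w f}

/-- The language recognized by the automaton. -/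
def lang (A : BlockAutomaton α Q) : Language α :=
  {w | ∃ i ∈ A.init, ∃ f ∈ A.final, A.Path i w f}

/-- Deterministic: a unique initial state, and the labels of two distinct transitions
going out of the same state are never prefixes of one another. -/
def Deterministic (A : BlockAutomaton α Q) : Prop :=
  (∃ i, A.init = {i}) ∧
    ∀ p b₁ q₁ b₂ q₂, (p, b₁, q₁) ∈ A.trans → (p, b₂, q₂) ∈ A.trans →
      (b₁, q₁) ≠ (b₂, q₂) → ¬ b₁ <+: b₂

/-- Trim: every state is accessible and co-accessible. -/
def Trim (A : BlockAutomaton α Q) : Prop :=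
  ∀ q : Q, (∃ i ∈ A.init, ∃ u, A.Path i u q) ∧ (∃ f ∈ A.final, ∃ v, A.Path q v f)

/-- `k`-block: every transition label has length at most `k`. -/
def KBlock (A : BlockAutomaton α Q) (k : ℕ) : Prop :=
  ∀ t ∈ A.trans, t.2.1.length ≤ k

/-- Compact: no two distinct states have the same right language. -/
def Compact (A : BlockAutomaton α Q) : Prop :=
  ∀ p q : Q, A.rightLang p = A.rightLang q → p = q

/-- Left quotient `u⁻¹L` of a language by a word. -/
def leftQuot (u : List α) (L : Language α) : Language α := {w | u ++ w ∈ L}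

/-- Residual: every right language is a left quotient of the recognized language. -/
def Residual (A : BlockAutomaton α Q) : Prop :=
  ∀ p : Q, ∃ u : List α, A.rightLang p = leftQuot u A.lang

/-- L-equivalence: same language and same family of right languages. -/
def LEquiv {Q₁ Q₂ : Type} (A : BlockAutomaton α Q₁) (B : BlockAutomaton α Q₂) : Prop :=
  A.lang = B.lang ∧ Set.range A.rightLang = Set.range B.rightLang

/-- The set of final labels FB(A). -/
def finalLabels (A : BlockAutomaton α Q) : Set (List α) :=
  {b | ∃ f ∈ A.final, ∃ q, (f, b, q) ∈ A.trans}

/-- The set of consistency C(A): pairs (b, s) with b a block such that every final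
state has a transition labeled b to s. -/
def consist (A : BlockAutomaton α Q) : Set (List α × Q) :=
  {bs | bs.1 ≠ [] ∧ ∀ f ∈ A.final, (f, bs.1, bs.2) ∈ A.trans}

/-- The (b,s)-cut: remove every transition (f, b, s) with f final. -/
def cut (A : BlockAutomaton α Q) (b : List α) (s : Q) : BlockAutomaton α Q :=
  ⟨A.init, A.final, {t ∈ A.trans | ¬(t.1 ∈ A.final ∧ t.2.1 = b ∧ t.2.2 = s)}⟩

/-- (b, s) is a vacant pair: b is a block and no final state has a transition
labeled b to s. -/
def Vacant (A : BlockAutomaton α Q) (b : List α) (s : Q) : Prop :=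
  b ≠ [] ∧ ∀ f ∈ A.final, (f, b, s) ∉ A.trans

/-- The (b,s)-add: add the transition (f, b, s) for every final state f. -/
def add (A : BlockAutomaton α Q) (b : List α) (s : Q) : BlockAutomaton α Q :=
  ⟨A.init, A.final, A.trans ∪ {t | t.1 ∈ A.final ∧ t.2.1 = b ∧ t.2.2 = s}⟩

/-- The underlying edge relation of the automaton. -/
def Edge (A : BlockAutomaton α Q) (p q : Q) : Prop := ∃ b, (p, b, q) ∈ A.trans

/-- Reachability. -/
def Reach (A : BlockAutomaton α Q) : Q → Q → Prop := Relation.ReflTransGen A.Edge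

/-- The orbit (strongly connected component) of a state. -/
def orbitOf (A : BlockAutomaton α Q) (q : Q) : Set Q := {p | A.Reach q p ∧ A.Reach p q}

/-- A set is an orbit if it is the strongly connected component of some state. -/
def IsOrbit (A : BlockAutomaton α Q) (O : Set Q) : Prop := ∃ q, O = A.orbitOf q

/-- A trivial orbit: a single state with no self-loop. -/
def TrivialOrbit (A : BlockAutomaton α Q) (O : Set Q) : Prop :=
  ∃ p, O = {p} ∧ ∀ b, (p, b, p) ∉ A.trans

/-- A non re-entering component: a union of orbits such that no state outside
reachable from it can reach back. -/
def NonReentering (A : BlockAutomaton α Q) (R : Set Q) : Prop :=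
  (∀ p ∈ R, A.orbitOf p ⊆ R) ∧
    ∀ r ∈ R, ∀ q, q ∉ R → A.Reach r q → ¬ A.Reach q r

/-- A gate of R: a state of R that is final or the origin of an out-transition. -/
def IsGate (A : BlockAutomaton α Q) (R : Set Q) (g : Q) : Prop :=
  g ∈ R ∧ (g ∈ A.final ∨ ∃ b p, (g, b, p) ∈ A.trans ∧ p ∉ R)

/-- R is transverse: all gates agree on finality and on out-transitions. -/
def Transverse (A : BlockAutomaton α Q) (R : Set Q) : Prop :=
  ∀ g₁ g₂, A.IsGate R g₁ → A.IsGate R g₂ →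
    (g₁ ∈ A.final ↔ g₂ ∈ A.final) ∧
      ∀ b p, p ∉ R → ((g₁, b, p) ∈ A.trans ↔ (g₂, b, p) ∈ A.trans)

/-- The orbit property: every orbit is transverse. -/
def OrbitProperty (A : BlockAutomaton α Q) : Prop :=
  ∀ O : Set Q, A.IsOrbit O → A.Transverse O

/-- The restriction of the automaton to the internal transitions of R. -/
def internalAut (A : BlockAutomaton α Q) (R : Set Q) : BlockAutomaton α Q :=
  ⟨A.init, A.final, {t ∈ A.trans | t.1 ∈ R ∧ t.2.2 ∈ R}⟩

/-- The internal language of a state of R: words sending it to a gate of R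
through internal transitions. -/
def Lin (A : BlockAutomaton α Q) (R : Set Q) (p : Q) : Language α :=
  {w | ∃ g, A.IsGate R g ∧ (A.internalAut R).Path p w g}

/-- The external language of a state of R. -/
def Lext (A : BlockAutomaton α Q) (R : Set Q) (p : Q) : Language α :=
  {w | (p ∈ A.final ∧ w = []) ∨
    ∃ b q, (p, b, q) ∈ A.trans ∧ q ∉ R ∧ ∃ v, v ∈ A.rightLang q ∧ w = b ++ v}

/-- The external language of R: the (common, when R is transverse) external
language of the gates of R (empty if R has no gate). -/
def Lout (A : BlockAutomaton α Q) (R : Set Q) : Language α :=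
  {w | ∃ g, A.IsGate R g ∧ w ∈ A.Lext R g}

/-- The automaton B_O of an orbit O used in the BW-test: transitions are the internal
transitions of O, final states are the gates of O (the initial states are irrelevant). -/
def orbAut (A : BlockAutomaton α Q) (O : Set Q) : BlockAutomaton α Q :=
  ⟨A.init, {g | A.IsGate O g}, {t ∈ A.trans | t.1 ∈ O ∧ t.2.2 ∈ O}⟩

/-- Fuel-indexed version of the BW-test (each recursive call removes at least one
transition, so on automata with finitely many transitions the recursion needs only
finitely much fuel). -/
def BWTestFuel : ℕ → BlockAutomaton α Q → Prop
  | 0, _ => False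
  | n + 1, A => A.OrbitProperty ∧
      ∀ O : Set Q, A.IsOrbit O → ¬ A.TrivialOrbit O →
        ∃ b s, (b, s) ∈ (A.orbAut O).consist ∧ BWTestFuel n ((A.orbAut O).cut b s)

/-- The BW-test: A passes iff A has the orbit property and, for every nontrivial
orbit O of A, some consistent cut of the automaton B_O of the orbit passes the
BW-test (well-founded since every cut removes a transition; `BWTestFuel` is
monotone in the fuel, so the existential gives exactly this recursive predicate). -/
def BWTest (A : BlockAutomaton α Q) : Prop := ∃ n, BWTestFuel n A

/-- The orbit automaton Orb(A, q): states are the orbit of q, initial state q, final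
states the gates of the orbit, transitions the internal transitions of the orbit. -/
def orbAutAt (A : BlockAutomaton α Q) (q : Q) :
    BlockAutomaton α {p : Q // p ∈ A.orbitOf q} where
  init := {x | x.val = q}
  final := {x | A.IsGate (A.orbitOf q) x.val}
  trans := {t | (t.1.val, t.2.1, t.2.2.val) ∈ A.trans}

/-- The pathway function Δ. -/
def pathway (A : BlockAutomaton α Q) (p : Q) (u : List α) : Set (List α × Q) :=
  {vq | A.Path p (u ++ vq.1) vq.2 ∧
    ∀ x, x <+: vq.1 → x ≠ vq.1 → ∀ r, ¬ A.Path p (u ++ x) r}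

/-- The states of the minimal DFA of L: the nonempty left quotients of L. -/
def QuotState (L : Language α) : Type :=
  {P : Language α // (∃ u : List α, P = leftQuot u L) ∧ ∃ w, w ∈ P}

/-- The minimal DFA of L. -/
def minDFA (L : Language α) : BlockAutomaton α (QuotState L) where
  init := {P | P.val = L}
  final := {P | [] ∈ P.val}
  trans := {t | ∃ a : α, t.2.1 = [a] ∧ t.2.2.val = leftQuot [a] t.1.val}

/-- The k-transition automaton of L. -/
def kTransAut (L : Language α) (k : ℕ) : BlockAutomaton α (QuotState L) where
  init := (minDFA L).init
  final := (minDFA L).final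
  trans := {t | (minDFA L).Path t.1 t.2.1 t.2.2 ∧ 1 ≤ t.2.1.length ∧ t.2.1.length ≤ k ∧
    ∀ u, u <+: t.2.1 → u ≠ [] → u ≠ t.2.1 → u ∉ t.1.val}

/-- B is isomorphic to a sub-automaton of T. -/
def IsoToSub {Q₁ Q₂ : Type} (B : BlockAutomaton α Q₁) (T : BlockAutomaton α Q₂) : Prop :=
  ∃ φ : Q₁ → Q₂, Function.Injective φ ∧
    φ '' B.init ⊆ T.init ∧ φ '' B.final ⊆ T.final ∧
    ∀ p b q, (p, b, q) ∈ B.trans → (φ p, b, φ q) ∈ T.trans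

/-- Isomorphism of block automata. -/
def Isomorphic {Q₁ Q₂ : Type} (B : BlockAutomaton α Q₁) (C : BlockAutomaton α Q₂) : Prop :=
  ∃ φ : Q₁ ≃ Q₂, φ '' B.init = C.init ∧ φ '' B.final = C.final ∧
    ∀ p b q, ((p, b, q) ∈ B.trans ↔ (φ p, b, φ q) ∈ C.trans)

/-- The substitution of B for the orbit O(q) of A via h (iA is the unique initial
state of A). -/
def substAut {QB : Type} (A : BlockAutomaton α Q) (iA q : Q)
    (B : BlockAutomaton α QB) (h : Q → QB) :
    BlockAutomaton α ({p : Q // p ∉ A.orbitOf q} ⊕ QB) where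
  init := {x | (iA ∈ A.orbitOf q ∧ x = Sum.inr (h iA)) ∨
    ∃ hp : iA ∉ A.orbitOf q, x = Sum.inl ⟨iA, hp⟩}
  final := {x | (∃ p, ∃ hp : p ∉ A.orbitOf q, p ∈ A.final ∧ x = Sum.inl ⟨p, hp⟩) ∨
    ((∃ f ∈ A.final, f ∈ A.orbitOf q) ∧ ∃ fB ∈ B.final, x = Sum.inr fB)}
  trans := {t |
    (∃ p r b, ∃ hp : p ∉ A.orbitOf q, ∃ hr : r ∉ A.orbitOf q,
      (p, b, r) ∈ A.trans ∧ t = (Sum.inl ⟨p, hp⟩, b, Sum.inl ⟨r, hr⟩)) ∨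
    (∃ p r b, (p, b, r) ∈ B.trans ∧ t = (Sum.inr p, b, Sum.inr r)) ∨
    (∃ p o b, ∃ hp : p ∉ A.orbitOf q,
      (p, b, o) ∈ A.trans ∧ o ∈ A.orbitOf q ∧ t = (Sum.inl ⟨p, hp⟩, b, Sum.inr (h o))) ∨
    (∃ fB o p b, ∃ hp : p ∉ A.orbitOf q, fB ∈ B.final ∧
      (o, b, p) ∈ A.trans ∧ o ∈ A.orbitOf q ∧ t = (Sum.inr fB, b, Sum.inl ⟨p, hp⟩))}

end BlockAutomaton

namespace BlockAutomaton

variable {α Q : Type}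

private lemma path_append {A : BlockAutomaton α Q} {p q r : Q} {u v : List α}
    (h1 : A.Path p u q) (h2 : A.Path q v r) : A.Path p (u ++ v) r := by
  induction h1 with
  | refl => simpa using h2
  | step ht _ ih => rw [List.append_assoc]; exact Path.step ht (ih h2)

private lemma internal_path_is_path {A : BlockAutomaton α Q} {R : Set Q} {p q : Q}
    {u : List α} (h : (A.internalAut R).Path p u q) : A.Path p u q := by
  induction h with
  | refl => exact Path.refl _
  | step ht _ ih => exact Path.step ht.1 ih

private lemma split_lemma {A : BlockAutomaton α Q} {R : Set Q} {w : List α} {p f : Q}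
    (hf : f ∈ A.final) (hp : A.Path p w f) :
    ∀ _ : p ∈ R, ∃ u v, u ∈ A.Lin R p ∧ v ∈ A.Lout R ∧ u ++ v = w := by
  induction hp with
  | refl p =>
    intro hpR
    have hg : A.IsGate R p := ⟨hpR, Or.inl hf⟩
    exact ⟨[], [], ⟨p, hg, Path.refl p⟩, ⟨p, hg, Or.inl ⟨hf, rfl⟩⟩, rfl⟩
  | @step p r q b u ht hpath ih =>
    intro hpR
    by_cases hrR : r ∈ R
    · obtain ⟨u', v', hu', hv', heq⟩ := ih hf hrR
      refine ⟨b ++ u', v', ?_, hv', by rw [List.append_assoc, heq]⟩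
      obtain ⟨g, hg, hgp⟩ := hu'
      exact ⟨g, hg, Path.step ⟨ht, hpR, hrR⟩ hgp⟩
    · have hg : A.IsGate R p := ⟨hpR, Or.inr ⟨b, r, ht, hrR⟩⟩
      exact ⟨[], b ++ u, ⟨p, hg, Path.refl p⟩,
        ⟨p, hg, Or.inr ⟨b, r, ht, hrR, u, ⟨q, hf, hpath⟩, rfl⟩⟩, rfl⟩

end BlockAutomaton

/-- If R is a transverse non re-entering component of a block automaton,
then the right language of every state p of R factorizes as L(p) = Lin_R(p)·Lout(R). -/
theorem stmt6 {α Q : Type} [Fintype α] [Fintype Q]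
    (A : BlockAutomaton α Q) (hwf : A.IsWF) (R : Set Q)
    (hR : A.NonReentering R) (htr : A.Transverse R) :
    ∀ p ∈ R, A.rightLang p = A.Lin R p * A.Lout R := by
  intro p hpR
  ext w
  constructor
  · rintro ⟨f, hf, hpath⟩
    obtain ⟨u, v, hu, hv, heq⟩ := BlockAutomaton.split_lemma hf hpath hpR
    exact ⟨u, hu, v, hv, heq⟩
  · rintro ⟨u, ⟨g, hg, hgp⟩, v, ⟨g', hg', hv⟩, rfl⟩
    have hpg : A.Path p u g := BlockAutomaton.internal_path_is_path hgp
    -- transfer v from Lext g' to Lext g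
    obtain ⟨hfin, hout⟩ := htr g g' hg hg'
    rcases hv with ⟨hgf, rfl⟩ | ⟨b, q, htq, hqR, v', ⟨f, hf, hqf⟩, rfl⟩
    · exact ⟨g, hfin.mpr hgf, by simpa using hpg⟩
    · have htq' : (g, b, q) ∈ A.trans := (hout b q hqR).mpr htq
      exact ⟨f, hf, BlockAutomaton.path_append hpg
        (BlockAutomaton.Path.step htq' hqf)⟩
end

section
/- Let A be a deterministic block automaton over a finite alphabet Σ and let (b, s) ∈ C(A) be an element of its set of consistency. Then for any two states p, q of A, L(p) = L(q) if and only if Lcut(p) = Lcut(q). -/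
set_option autoImplicit false

section Aux

namespace BlockAutomaton

variable {α Q : Type}

lemma path_nil_eq {A : BlockAutomaton α Q} (hwf : ∀ t ∈ A.trans, t.2.1 ≠ ([] : List α))
    {p q : Q} {w : List α} (h : A.Path p w q) (hw : w = []) : p = q := by
  cases h with
  | refl => rfl
  | step ht hp => exact absurd (List.append_eq_nil_iff.mp hw).1 (hwf _ ht)

lemma path_inv {A : BlockAutomaton α Q} {p q : Q} {w : List α}
    (h : A.Path p w q) (hw : w ≠ []) :
    ∃ b₁ r u₁, (p, b₁, r) ∈ A.trans ∧ A.Path r u₁ q ∧ w = b₁ ++ u₁ := by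
  cases h with
  | refl => exact absurd rfl hw
  | step ht hp => exact ⟨_, _, _, ht, hp, rfl⟩

lemma Path.append {A : BlockAutomaton α Q} {p r q : Q} {u v : List α}
    (h1 : A.Path p u r) (h2 : A.Path r v q) : A.Path p (u ++ v) q := by
  induction h1 with
  | refl => simpa using h2
  | step ht _ ih => rw [List.append_assoc]; exact Path.step ht (ih h2)

lemma Path.mono {A D : BlockAutomaton α Q} (hsub : D.trans ⊆ A.trans) {p q : Q} {w : List α}
    (h : D.Path p w q) : A.Path p w q := by
  induction h with
  | refl => exact Path.refl _
  | step ht _ ih => exact Path.step (hsub ht) ih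

lemma prefix_comparable {l₁ l₂ l₃ : List α} (h1 : l₁ <+: l₃) (h2 : l₂ <+: l₃) :
    l₁ <+: l₂ ∨ l₂ <+: l₁ := by
  obtain ⟨t1, rfl⟩ := h1
  obtain ⟨t2, h⟩ := h2
  rcases le_total l₁.length l₂.length with hle | hle
  · left
    have : l₁ = (l₂ ++ t2).take l₁.length := by rw [h]; simp
    rw [this, List.take_append_of_le_length hle]
    exact (l₂.take_prefix _)
  · right
    have : l₂ = (l₁ ++ t1).take l₂.length := by rw [← h]; simp
    rw [this, List.take_append_of_le_length hle]
    exact (l₁.take_prefix _)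

/-- In a deterministic automaton, a path in a subautomaton `D` of `A` that reads `w`,
together with an `A`-path reading a prefix `u` of `w`, passes through the endpoint of the
latter; the remaining `D`-path reads `w.drop u.length`. -/
lemma det_suffix {A D : BlockAutomaton α Q}
    (hwf : ∀ t ∈ A.trans, t.2.1 ≠ ([] : List α))
    (hdet : ∀ p b₁ q₁ b₂ q₂, (p, b₁, q₁) ∈ A.trans → (p, b₂, q₂) ∈ A.trans →
      (b₁, q₁) ≠ (b₂, q₂) → ¬ b₁ <+: b₂)
    (hsub : D.trans ⊆ A.trans) {p f : Q} {u : List α}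
    (hA : A.Path p u f) :
    ∀ {w : List α} {q : Q}, D.Path p w q → u <+: w → D.Path f (w.drop u.length) q := by
  induction hA with
  | refl => intro w q hD _; simpa using hD
  | @step p r₂ f b₂ u₂ ht₂ hp₂ ih =>
    intro w q hD hpre
    have hwne : w ≠ [] := by
      rintro rfl
      exact hwf _ ht₂ (List.append_eq_nil_iff.mp (List.prefix_nil.mp hpre)).1
    obtain ⟨b₁, r₁, u₁, ht₁, hp₁, rfl⟩ := path_inv hD hwne
    have hb₂ : b₂ <+: b₁ ++ u₁ := ((b₂.prefix_append u₂).trans hpre)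
    have hb₁ : b₁ <+: b₁ ++ u₁ := b₁.prefix_append u₁
    have heq : (b₁, r₁) = (b₂, r₂) := by
      by_contra hne
      rcases prefix_comparable hb₁ hb₂ with hc | hc
      · exact hdet _ _ _ _ _ (hsub ht₁) ht₂ hne hc
      · exact hdet _ _ _ _ _ ht₂ (hsub ht₁) (fun h => hne h.symm) hc
    obtain ⟨hb, hr⟩ := Prod.mk.injEq .. ▸ heq
    subst hb
    cases hr
    have hpre' : u₂ <+: u₁ := by
      obtain ⟨t, ht⟩ := hpre
      exact ⟨t, List.append_cancel_left (as := b₁) (by simpa [List.append_assoc] using ht)⟩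
    have hlen : (b₁ ++ u₁).drop (b₁ ++ u₂).length = u₁.drop u₂.length := by
      rw [List.length_append, ← List.drop_drop, List.drop_left]
    rw [hlen]
    exact ih hp₁ hpre'

variable {A : BlockAutomaton α Q} {b : List α} {s : Q}

/-- Any accepting `A`-path whose word admits no `(b,s)`-style decomposition is a path
in the cut automaton. -/
lemma path_toCut (hbs : (b, s) ∈ A.consist) :
    ∀ {p w f}, A.Path p w f → f ∈ A.final →
      (∀ u v, w = u ++ b ++ v → u ∈ A.rightLang p → v ∈ A.rightLang s → False) →
      (A.cut b s).Path p w f := by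
  intro p w f hpath
  induction hpath with
  | refl => intro _ _; exact Path.refl _
  | @step p r f b₁ u₁ ht hp ih =>
    intro hf hno
    have htc : (p, b₁, r) ∈ (A.cut b s).trans := by
      refine ⟨ht, ?_⟩
      rintro ⟨hpf, rfl, rfl⟩
      exact hno [] u₁ (by simp) ⟨p, hpf, Path.refl _⟩ ⟨f, hf, hp⟩
    refine Path.step htc (ih hf ?_)
    rintro u v rfl hu hv
    obtain ⟨f₂, hf₂, hpu⟩ := hu
    exact hno (b₁ ++ u) v (by simp [List.append_assoc]) ⟨f₂, hf₂, Path.step ht hpu⟩ hv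

/-- Conversely, every accepting `A`-path decomposes. -/
lemma path_decomp (hbs : (b, s) ∈ A.consist) :
    ∀ {p w f}, A.Path p w f → f ∈ A.final →
      w ∈ (A.cut b s).rightLang p ∨
        ∃ u v, w = u ++ b ++ v ∧ u ∈ (A.cut b s).rightLang p ∧ v ∈ A.rightLang s := by
  intro p w f hpath
  induction hpath with
  | refl => intro hf; exact Or.inl ⟨_, hf, Path.refl _⟩
  | @step p r f b₁ u₁ ht hp ih =>
    intro hf
    by_cases hrem : p ∈ A.final ∧ b₁ = b ∧ r = s
    · obtain ⟨hpf, rfl, rfl⟩ := hrem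
      exact Or.inr ⟨[], u₁, by simp, ⟨p, hpf, Path.refl _⟩, ⟨f, hf, hp⟩⟩
    · have htc : (p, b₁, r) ∈ (A.cut b s).trans := ⟨ht, hrem⟩
      rcases ih hf with ⟨f₂, hf₂, hc⟩ | ⟨u, v, rfl, ⟨f₂, hf₂, hc⟩, hv⟩
      · exact Or.inl ⟨f₂, hf₂, Path.step htc hc⟩
      · exact Or.inr ⟨b₁ ++ u, v, by simp [List.append_assoc],
          ⟨f₂, hf₂, Path.step htc hc⟩, hv⟩

/-- Characterization of the cut language in terms of the right languages. -/
lemma cut_lang_eq (hwf : A.IsWF) (hdet : A.Deterministic) (hbs : (b, s) ∈ A.consist) (p : Q) :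
    (A.cut b s).rightLang p =
      {w | w ∈ A.rightLang p ∧
        ¬ ∃ u v, w = u ++ b ++ v ∧ u ∈ A.rightLang p ∧ v ∈ A.rightLang s} := by
  have hsub : (A.cut b s).trans ⊆ A.trans := fun t ht => ht.1
  ext w
  constructor
  · rintro ⟨f, hf, hpath⟩
    refine ⟨⟨f, hf, hpath.mono hsub⟩, ?_⟩
    rintro ⟨u, v, rfl, ⟨f', hf', hpu⟩, ⟨f'', hf'', hpv⟩⟩
    have hdrop := det_suffix hwf.2 hdet.2 hsub hpu hpath
      ⟨b ++ v, by simp [List.append_assoc]⟩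
    rw [show (u ++ b ++ v).drop u.length = b ++ v by
      rw [List.append_assoc, List.drop_left]] at hdrop
    have hbvne : b ++ v ≠ [] := fun h => hbs.1 (List.append_eq_nil_iff.mp h).1
    obtain ⟨b₃, r₃, u₃, ht₃, hp₃, hsplit⟩ := path_inv hdrop hbvne
    have hts : (f', b, s) ∈ A.trans := hbs.2 f' hf'
    have hb₃ : b₃ <+: b₃ ++ u₃ := b₃.prefix_append u₃
    have hbb : b <+: b₃ ++ u₃ := hsplit ▸ b.prefix_append v
    have heq : (b₃, r₃) = (b, s) := by
      by_contra hne
      rcases prefix_comparable hb₃ hbb with hc | hc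
      · exact hdet.2 _ _ _ _ _ (hsub ht₃) hts hne hc
      · exact hdet.2 _ _ _ _ _ hts (hsub ht₃) (fun h => hne h.symm) hc
    obtain ⟨hb, hr⟩ := Prod.mk.injEq .. ▸ heq
    subst hb; subst hr
    exact ht₃.2 ⟨hf', rfl, rfl⟩
  · rintro ⟨⟨f, hf, hpath⟩, hno⟩
    exact ⟨f, hf, path_toCut hbs hpath hf (fun u v h hu hv => hno ⟨u, v, h, hu, hv⟩)⟩

/-- Characterization of the right language in terms of the cut language. -/
lemma lang_eq_cut (hbs : (b, s) ∈ A.consist) (p : Q) :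
    A.rightLang p =
      {w | w ∈ (A.cut b s).rightLang p ∨
        ∃ u v, w = u ++ b ++ v ∧ u ∈ (A.cut b s).rightLang p ∧ v ∈ A.rightLang s} := by
  have hsub : (A.cut b s).trans ⊆ A.trans := fun t ht => ht.1
  ext w
  constructor
  · rintro ⟨f, hf, hpath⟩
    exact path_decomp hbs hpath hf
  · rintro (⟨f, hf, hpath⟩ | ⟨u, v, rfl, ⟨f, hf, hpu⟩, ⟨f', hf', hpv⟩⟩)
    · exact ⟨f, hf, hpath.mono hsub⟩
    · refine ⟨f', hf', ?_⟩
      rw [List.append_assoc]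
      exact (hpu.mono hsub).append (Path.step (hbs.2 f hf) hpv)

end BlockAutomaton

end Aux

/-- In a deterministic block automaton with (b, s) in its set of
consistency, two states have the same right language iff they have the same
(b,s)-cut language. -/

theorem stmt9 {α Q : Type} [Fintype α] [Fintype Q]
    (A : BlockAutomaton α Q) (hwf : A.IsWF) (hdet : A.Deterministic)
    (b : List α) (s : Q) (hbs : (b, s) ∈ A.consist) :
    ∀ p q : Q,
      A.rightLang p = A.rightLang q ↔
        (A.cut b s).rightLang p = (A.cut b s).rightLang q := by
  intro p q
  constructor
  · intro h
    rw [BlockAutomaton.cut_lang_eq hwf hdet hbs p, BlockAutomaton.cut_lang_eq hwf hdet hbs q, h]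
  · intro h
    rw [BlockAutomaton.lang_eq_cut hbs p, BlockAutomaton.lang_eq_cut hbs q, h]
end
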